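/- Pythagorean decomposition of the objective at stationary points: if P ∈ ℝ^{n×k} satisfies Pᵀ·P = I_k and Q ∈ ℝ^{n×k} satisfies Xᵀ·Q = Π·Yᵀ·P, then ‖Y − P·Qᵀ·X‖_F² = ‖Z − P·Pᵀ·Z‖_F² + ‖Y·(I_m − Π)‖_F². -/

import Mathlib

/-! The residual splits as `(Z - P Pᵀ Z) + Y (1 - Π)` once the stationarity condition is
transposed to `Qᵀ X = Pᵀ Z`. The first summand has the form `W Π`, the second `Y (1 - Π)`, and
since `Π` is a symmetric idempotent, `W Π (Y (1 - Π))ᵀ = W Π (1 - Π) Yᵀ = 0`: the two summands are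
orthogonal for the Frobenius inner product `⟨A, B⟩ = tr (A Bᵀ)`, and Pythagoras gives the claim. -/

open Matrix

/-- The Frobenius norm of a real matrix. -/
noncomputable def frobNorm {p q : ℕ} (A : Matrix (Fin p) (Fin q) ℝ) : ℝ :=
  Real.sqrt (∑ i, ∑ j, (A i j) ^ 2)

lemma frobNorm_sq {p q : ℕ} (A : Matrix (Fin p) (Fin q) ℝ) :
    frobNorm A ^ 2 = ∑ i, ∑ j, A i j ^ 2 :=
  Real.sq_sqrt (by positivity)

lemma trace_mul_transpose_eq_sum {R l m : Type*} [Fintype l] [Fintype m] [CommSemiring R]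
    (A B : Matrix l m R) : trace (A * Bᵀ) = ∑ i, ∑ j, A i j * B i j := by
  simp only [trace, diag_apply, mul_apply, transpose_apply]

lemma frobNorm_add_sq_of_mul_transpose_eq_zero {p q : ℕ} (A B : Matrix (Fin p) (Fin q) ℝ)
    (h : A * Bᵀ = 0) : frobNorm (A + B) ^ 2 = frobNorm A ^ 2 + frobNorm B ^ 2 := by
  have hcross : ∑ i, ∑ j, A i j * B i j = 0 := by
    rw [← trace_mul_transpose_eq_sum, h, trace_zero]
  have hexpand : ∑ i, ∑ j, (A + B) i j ^ 2 =
      ∑ i, ∑ j, A i j ^ 2 + ∑ i, ∑ j, B i j ^ 2 + 2 * ∑ i, ∑ j, A i j * B i j := by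
    simp only [Finset.mul_sum, ← Finset.sum_add_distrib]
    exact Finset.sum_congr rfl fun i _ => Finset.sum_congr rfl fun j _ => by
      rw [Matrix.add_apply]; ring
  rw [frobNorm_sq, frobNorm_sq, frobNorm_sq, hexpand, hcross, mul_zero, add_zero]

lemma mul_mul_transpose_mul_one_sub_eq_zero {R l l' m : Type*} [Fintype m] [DecidableEq m]
    [CommRing R] {E : Matrix m m R} (hidem : E * E = E) (hsymm : Eᵀ = E)
    (W : Matrix l m R) (Y : Matrix l' m R) : W * E * (Y * (1 - E))ᵀ = 0 := by
  rw [transpose_mul, transpose_sub, transpose_one, hsymm, Matrix.mul_assoc, ← Matrix.mul_assoc E,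
    Matrix.mul_sub, Matrix.mul_one, hidem, sub_self, Matrix.zero_mul, Matrix.mul_zero]

theorem stmt_14_general (n m k : ℕ)
    (X Y : Matrix (Fin n) (Fin m) ℝ) (G : Matrix (Fin m) (Fin n) ℝ)
    (hG2 : G * X * G = G) (hG4 : (G * X)ᵀ = G * X)
    (P Q : Matrix (Fin n) (Fin k) ℝ)
    (hQ : Xᵀ * Q = (G * X) * Yᵀ * P) :
    frobNorm (Y - P * Qᵀ * X) ^ 2 =
      frobNorm (Y * (G * X) - P * Pᵀ * (Y * (G * X))) ^ 2 +
      frobNorm (Y * (1 - G * X)) ^ 2 := by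
  have hidem : G * X * (G * X) = G * X := by rw [← Matrix.mul_assoc, hG2]
  have hQX : Qᵀ * X = Pᵀ * (Y * (G * X)) := by
    simpa only [transpose_mul Xᵀ Q, transpose_mul (G * X * Yᵀ) P, transpose_mul (G * X) Yᵀ,
      transpose_transpose, hG4] using congrArg transpose hQ
  have hfactor : Y * (G * X) - P * Pᵀ * (Y * (G * X)) = (Y - P * Pᵀ * Y) * (G * X) := by
    rw [Matrix.sub_mul, Matrix.mul_assoc (P * Pᵀ)]
  have hsplit : Y - P * Qᵀ * X = (Y - P * Pᵀ * Y) * (G * X) + Y * (1 - G * X) := by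
    rw [← hfactor, Matrix.mul_assoc P, hQX, Matrix.mul_sub, Matrix.mul_one,
      ← Matrix.mul_assoc P]
    abel
  rw [hsplit, hfactor, frobNorm_add_sq_of_mul_transpose_eq_zero _ _
    (mul_mul_transpose_mul_one_sub_eq_zero hidem hG4 _ _)]

/-- Pythagorean decomposition of the objective at stationary points: if `Pᵀ P = I_k` and
`Xᵀ Q = Π Yᵀ P` (with `Π = G X`, `Z = Y Π`), then
`‖Y - P Qᵀ X‖_F² = ‖Z - P Pᵀ Z‖_F² + ‖Y (I - Π)‖_F²`. -/
theorem stmt_14 (n m k : ℕ) (hk : 0 < k) (hkm : k ≤ m) (hmn : m ≤ n)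
    (X Y : Matrix (Fin n) (Fin m) ℝ) (G : Matrix (Fin m) (Fin n) ℝ)
    (hG1 : X * G * X = X) (hG2 : G * X * G = G)
    (hG3 : (X * G)ᵀ = X * G) (hG4 : (G * X)ᵀ = G * X)
    (P Q : Matrix (Fin n) (Fin k) ℝ) (hP : Pᵀ * P = 1)
    (hQ : Xᵀ * Q = (G * X) * Yᵀ * P) :
    frobNorm (Y - P * Qᵀ * X) ^ 2 =
      frobNorm (Y * (G * X) - P * Pᵀ * (Y * (G * X))) ^ 2 +
      frobNorm (Y * (1 - G * X)) ^ 2 :=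
  stmt_14_general n m k X Y G hG2 hG4 P Q hQ
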